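/- For every d ≥ 1 and every M ∈ SL(d+1,ℝ), the number of distinct values taken by F(M,t) as t ranges over (0,1) is at most 2^d + 1; that is, #{ F(M,t) : t ∈ (0,1) } ≤ 2^d + 1. -/

import Mathlib

/-!
Each value `F(M,t)` is attained by a lattice point `(u,v)` with `-t < u < 1-t` (the lattice is
discrete, and for `d ≥ 1` the window always contains a point with `v ≠ 0`); after replacing the
point by its negative, `0 ≤ u < 1`. If `‖v‖ < F(M,s)` for some `s`, then neither `(u,v)` nor
`-(u,v)` lies in the window of `s`, which forces `|u| ≥ 1/2`.

Let `r ≠ r'` be values smaller than some value `F(M,s)`, attained by `(u,v)` and `(u',v')` with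
`v` and `v'` of the same sign in every coordinate. Then `0 < ‖v - v'‖ ≤ max r r' < F(M,s)`, while
`u, u' ∈ [1/2, 1)` give `|u - u'| < 1/2`, contradicting the previous paragraph. So the sign
pattern of `v` separates all values except the largest one: there are at most `2^d + 1`.
-/

open Matrix Set

/-- The point of the lattice `ℤ^{d+1} M` corresponding to the integer row vector `w`
(row vectors acting on the right). -/
noncomputable def latPoint {d : ℕ} (M : Matrix (Fin (d + 1)) (Fin (d + 1)) ℝ)
    (w : Fin (d + 1) → ℤ) : Fin (d + 1) → ℝ :=
  (fun i => (w i : ℝ)) ᵥ* M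

/-- For a point `x = (u, v) ∈ ℝ^{d+1}`, `vpart x = v ∈ ℝ^d` is the vector of the last `d`
coordinates (the first coordinate `x 0` being `u`). -/
def vpart {d : ℕ} (x : Fin (d + 1) → ℝ) : Fin d → ℝ := fun i => x i.succ

/-- The set `S(M, t) = { ‖v‖_∞ : (u, v) ∈ ℤ^{d+1} M, ‖v‖_∞ > 0, −t < u < 1 − t }`.
(The norm on `Fin d → ℝ` is the maximum norm.) -/
noncomputable def FSet (d : ℕ) (M : Matrix (Fin (d + 1)) (Fin (d + 1)) ℝ) (t : ℝ) :
    Set ℝ :=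
  { r : ℝ | ∃ w : Fin (d + 1) → ℤ, r = ‖vpart (latPoint M w)‖ ∧ 0 < r ∧
      -t < latPoint M w 0 ∧ latPoint M w 0 < 1 - t }

/-- `F(M, t) = min S(M, t)`. -/
noncomputable def Fval (d : ℕ) (M : Matrix (Fin (d + 1)) (Fin (d + 1)) ℝ) (t : ℝ) : ℝ :=
  sInf (FSet d M t)

section Lattice

variable {d : ℕ} (M : Matrix (Fin (d + 1)) (Fin (d + 1)) ℝ)

noncomputable def latPointHom : (Fin (d + 1) → ℤ) →+ (Fin (d + 1) → ℝ) :=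
  (vecMulLinear M).toAddMonoidHom.comp ((Int.castAddHom ℝ).compLeft (Fin (d + 1)))

@[simp] lemma latPoint_zero : latPoint M 0 = 0 := map_zero (latPointHom M)

@[simp] lemma latPoint_neg (w : Fin (d + 1) → ℤ) : latPoint M (-w) = -latPoint M w :=
  map_neg (latPointHom M) w

@[simp] lemma latPoint_add (v w : Fin (d + 1) → ℤ) :
    latPoint M (v + w) = latPoint M v + latPoint M w :=
  map_add (latPointHom M) v w

@[simp] lemma latPoint_sub (v w : Fin (d + 1) → ℤ) :
    latPoint M (v - w) = latPoint M v - latPoint M w :=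
  map_sub (latPointHom M) v w

@[simp] lemma latPoint_zsmul (k : ℤ) (w : Fin (d + 1) → ℤ) :
    latPoint M (k • w) = k • latPoint M w :=
  map_zsmul (latPointHom M) k w

lemma latPoint_single_one (i : Fin (d + 1)) : latPoint M (Pi.single i 1) = M i := by
  have : (fun j => ((Pi.single i (1 : ℤ) : Fin (d + 1) → ℤ) j : ℝ)) = Pi.single i 1 := by
    ext j; by_cases h : j = i <;> simp [h]
  rw [latPoint, this, single_one_vecMul, row]

@[simp] lemma vpart_neg (x : Fin (d + 1) → ℝ) : vpart (-x) = -vpart x := rfl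

@[simp] lemma vpart_add (x y : Fin (d + 1) → ℝ) : vpart (x + y) = vpart x + vpart y := rfl

@[simp] lemma vpart_sub (x y : Fin (d + 1) → ℝ) : vpart (x - y) = vpart x - vpart y := rfl

@[simp] lemma vpart_zsmul (k : ℤ) (x : Fin (d + 1) → ℝ) : vpart (k • x) = k • vpart x := rfl

variable {M}

lemma intCast_eq_latPoint_vecMul_inv (hM : IsUnit M.det) (w : Fin (d + 1) → ℤ) :
    (fun i => (w i : ℝ)) = latPoint M w ᵥ* M⁻¹ := by
  rw [latPoint, vecMul_vecMul, mul_nonsing_inv _ hM, vecMul_one]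

lemma latPoint_eq_zero_iff (hM : IsUnit M.det) {w : Fin (d + 1) → ℤ} :
    latPoint M w = 0 ↔ w = 0 := by
  refine ⟨fun h => funext fun i => ?_, fun h => h ▸ latPoint_zero M⟩
  simpa [h] using congrFun (intCast_eq_latPoint_vecMul_inv hM w) i

lemma finite_setOf_norm_latPoint_le (hM : IsUnit M.det) (R : ℝ) :
    {w | ‖latPoint M w‖ ≤ R}.Finite := by
  have hK : IsCompact ((· ᵥ* M⁻¹) '' Metric.closedBall (0 : Fin (d + 1) → ℝ) R) :=
    (isCompact_closedBall 0 R).image (continuous_id.matrix_vecMul continuous_const)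
  obtain ⟨C, hC⟩ := hK.isBounded.subset_closedBall 0
  refine (isCompact_closedBall (0 : Fin (d + 1) → ℤ) C).finite_of_discrete.subset fun w hw => ?_
  have hcast : ‖fun i => (w i : ℝ)‖ ≤ C := by
    simpa [intCast_eq_latPoint_vecMul_inv hM] using hC ⟨_, mem_closedBall_zero_iff.2 hw, rfl⟩
  refine mem_closedBall_zero_iff.2 ((pi_norm_le_iff_of_nonneg ((norm_nonneg _).trans hcast)).2
    fun i => ?_)
  simpa [← Int.norm_cast_real] using (norm_le_pi_norm _ i).trans hcast

lemma exists_vpart_latPoint_ne_zero (hM : M.det ≠ 0) (hd : 0 < d) :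
    ∃ w, vpart (latPoint M w) ≠ 0 := by
  by_contra! h
  refine hM (det_eq_zero_of_column_eq_zero (Fin.succ ⟨0, hd⟩) fun i => ?_)
  rw [← latPoint_single_one M i]
  exact congrFun (h (Pi.single i 1)) ⟨0, hd⟩

end Lattice

lemma exists_isLeast_of_finite_inter_Iic {α : Type*} [LinearOrder α] {S : Set α} {a : α}
    (ha : a ∈ S) (hfin : (S ∩ Iic a).Finite) : ∃ m, IsLeast S m := by
  obtain ⟨m, ⟨hmS, hma⟩, hmin⟩ := (S ∩ Iic a).exists_min_image id hfin ⟨a, ha, le_rfl⟩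
  refine ⟨m, hmS, fun x hx => ?_⟩
  rcases le_total x a with h | h
  · exact hmin x ⟨hx, h⟩
  · exact hma.trans h

lemma norm_le_max_abs_vpart {d : ℕ} (x : Fin (d + 1) → ℝ) : ‖x‖ ≤ max |x 0| ‖vpart x‖ := by
  refine (pi_norm_le_iff_of_nonneg (by positivity)).2 fun i => ?_
  refine Fin.cases (le_max_of_le_left (Real.norm_eq_abs _).le) (fun j => ?_) i
  exact le_max_of_le_right (norm_le_pi_norm (vpart x) j)

lemma AddMonoidHom.exists_ne_zero_map_eq_zero_of_range_eq_closure {ι G : Type*} [Nontrivial ι]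
    [AddCommGroup G] (f : (ι → ℤ) →+ G) {a : G} (h : f.range = AddSubgroup.closure {a}) :
    ∃ w ≠ 0, f w = 0 := by
  classical
  obtain ⟨i, j, hij⟩ := exists_pair_ne ι
  have hmul : ∀ k, ∃ n : ℤ, n • a = f (Pi.single k 1) := fun k =>
    AddSubgroup.mem_closure_singleton.1 (h ▸ AddMonoidHom.mem_range.2 ⟨_, rfl⟩)
  obtain ⟨m, hm⟩ := hmul i
  obtain ⟨n, hn⟩ := hmul j
  by_cases hm0 : m = 0
  · exact ⟨Pi.single i 1, by simp, by rw [← hm, hm0, zero_smul]⟩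
  · refine ⟨n • Pi.single i 1 - m • Pi.single j 1, fun h => hm0 ?_, ?_⟩
    · simpa [hij.symm] using congrFun h j
    · rw [map_sub, map_zsmul, map_zsmul, ← hm, ← hn, smul_smul, smul_smul, mul_comm, sub_self]

lemma abs_sub_le_max_abs_of_nonneg_iff {a b : ℝ} (h : 0 ≤ a ↔ 0 ≤ b) :
    |a - b| ≤ max |a| |b| := by
  rcases le_or_gt 0 a with ha | ha
  · have hb := h.1 ha
    rw [abs_of_nonneg ha, abs_of_nonneg hb, abs_sub_le_iff]
    exact ⟨(sub_le_self a hb).trans (le_max_left a b),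
      (sub_le_self b ha).trans (le_max_right a b)⟩
  · have hb : b < 0 := not_le.1 (mt h.2 ha.not_ge)
    rw [abs_of_neg ha, abs_of_neg hb, abs_sub_le_iff]
    exact ⟨by linarith [le_max_right (-a) (-b)], by linarith [le_max_left (-a) (-b)]⟩

lemma norm_sub_le_max_of_nonneg_iff {ι : Type*} [Fintype ι] {y y' : ι → ℝ}
    (h : ∀ l, 0 ≤ y l ↔ 0 ≤ y' l) : ‖y - y'‖ ≤ max ‖y‖ ‖y'‖ := by
  refine (pi_norm_le_iff_of_nonneg (by positivity)).2 fun l => ?_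
  simpa only [Pi.sub_apply, Real.norm_eq_abs] using
    (abs_sub_le_max_abs_of_nonneg_iff (h l)).trans
      (max_le_max (norm_le_pi_norm y l) (norm_le_pi_norm y' l))

section Window

variable {d : ℕ} {M : Matrix (Fin (d + 1)) (Fin (d + 1)) ℝ} {s t : ℝ}

lemma norm_vpart_mem_FSet {w : Fin (d + 1) → ℤ} (hv : vpart (latPoint M w) ≠ 0)
    (hu : latPoint M w 0 ∈ Ioo (-t) (1 - t)) : ‖vpart (latPoint M w)‖ ∈ FSet d M t :=
  ⟨w, rfl, norm_pos_iff.2 hv, hu⟩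

lemma Fval_le_of_mem {r : ℝ} (hr : r ∈ FSet d M t) : Fval d M t ≤ r :=
  csInf_le ⟨0, fun _ ⟨_, _, hpos, _⟩ => hpos.le⟩ hr

lemma half_le_abs_of_norm_vpart_lt_Fval (hs0 : 0 < s) (hs1 : s < 1) {w : Fin (d + 1) → ℤ}
    (hv : vpart (latPoint M w) ≠ 0) (hlt : ‖vpart (latPoint M w)‖ < Fval d M s) :
    1 / 2 ≤ |latPoint M w 0| := by
  have hout : ∀ w' : Fin (d + 1) → ℤ, vpart (latPoint M w') ≠ 0 →
      ‖vpart (latPoint M w')‖ < Fval d M s → latPoint M w' 0 ∉ Ioo (-s) (1 - s) :=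
    fun w' hv' hlt' hu' => (Fval_le_of_mem (norm_vpart_mem_FSet hv' hu')).not_gt hlt'
  have h := hout w hv hlt
  have h' := hout (-w) (by simpa using hv) (by simpa using hlt)
  simp only [latPoint_neg, Pi.neg_apply, mem_Ioo, neg_lt_neg_iff, not_and_or, not_lt] at h h'
  rcases le_total 0 (latPoint M w 0) with hu | hu
  · rw [abs_of_nonneg hu]; rcases h with h | h <;> rcases h' with h' | h' <;> linarith
  · rw [abs_of_nonpos hu]; rcases h with h | h <;> rcases h' with h' | h' <;> linarith

lemma Fval_mem_FSet (hM : IsUnit M.det) (hne : (FSet d M t).Nonempty) :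
    Fval d M t ∈ FSet d M t := by
  obtain ⟨r, hr⟩ := hne
  have hfin : (FSet d M t ∩ Iic r).Finite := by
    refine ((finite_setOf_norm_latPoint_le hM (max (|t| + 1) r)).image
      fun w => ‖vpart (latPoint M w)‖).subset ?_
    rintro _ ⟨⟨w, rfl, -, hu⟩, hle⟩
    refine ⟨w, (norm_le_max_abs_vpart _).trans (max_le_max ?_ hle), rfl⟩
    cases abs_cases t <;> cases abs_cases (latPoint M w 0) <;> linarith [hu.1, hu.2]
  obtain ⟨m, hm⟩ := exists_isLeast_of_finite_inter_Iic hr hfin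
  rw [Fval, hm.csInf_eq]
  exact hm.1

lemma FSet_nonempty (hM : IsUnit M.det) (hd : 0 < d) (ht0 : 0 < t) (ht1 : t < 1) :
    (FSet d M t).Nonempty := by
  suffices ∃ w, vpart (latPoint M w) ≠ 0 ∧ latPoint M w 0 ∈ Ioo (-t) (1 - t) by
    obtain ⟨w, hv, hu⟩ := this
    exact ⟨_, norm_vpart_mem_FSet hv hu⟩
  let u : (Fin (d + 1) → ℤ) →+ ℝ := (Pi.evalAddMonoidHom (fun _ => ℝ) 0).comp (latPointHom M)
  rcases AddSubgroup.dense_or_cyclic u.range with hdense | ⟨a, ha⟩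
  · obtain ⟨_, ⟨q, rfl⟩, hq⟩ :=
      hdense.exists_mem_open isOpen_Ioo (nonempty_Ioo.2 (lt_min ht0 (sub_pos.2 ht1)))
    change latPoint M q 0 ∈ Ioo 0 (min t (1 - t)) at hq
    by_cases hvq : vpart (latPoint M q) = 0
    · -- adding multiples of `q` keeps `v` and moves `u` in steps shorter than the window
      obtain ⟨p, hp⟩ := exists_vpart_latPoint_ne_zero hM.ne_zero hd
      obtain ⟨k, hk, -⟩ := existsUnique_add_zsmul_mem_Ioc hq.1 (latPoint M p 0) (-t)
      refine ⟨p + k • q, ?_, ?_⟩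
      · simpa only [latPoint_add, latPoint_zsmul, vpart_add, vpart_zsmul, hvq, smul_zero,
          add_zero] using hp
      · simp only [latPoint_add, latPoint_zsmul, Pi.add_apply, Pi.smul_apply] at hk ⊢
        exact ⟨hk.1, hk.2.trans_lt (by linarith [hq.2.trans_le (min_le_right _ _)])⟩
    · exact ⟨q, hvq, by linarith [hq.1], by linarith [hq.2.trans_le (min_le_right _ _)]⟩
  · have : Nontrivial (Fin (d + 1)) := Fin.nontrivial_iff_two_le.2 (by omega)
    obtain ⟨w, hw0, hw⟩ := u.exists_ne_zero_map_eq_zero_of_range_eq_closure ha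
    change latPoint M w 0 = 0 at hw
    refine ⟨w, fun hv => hw0 ((latPoint_eq_zero_iff hM).1 (funext fun j => ?_)), ?_⟩
    · exact Fin.cases hw (fun j => congrFun hv j) j
    · rw [hw]; exact ⟨by linarith, by linarith⟩

lemma exists_norm_vpart_eq_Fval (hM : IsUnit M.det) (hd : 0 < d) (ht0 : 0 < t) (ht1 : t < 1) :
    ∃ w, vpart (latPoint M w) ≠ 0 ∧ ‖vpart (latPoint M w)‖ = Fval d M t ∧
      latPoint M w 0 ∈ Ico 0 1 := by
  obtain ⟨w, hr, hpos, hu⟩ := Fval_mem_FSet hM (FSet_nonempty hM hd ht0 ht1)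
  have hv : vpart (latPoint M w) ≠ 0 := norm_pos_iff.1 (hr ▸ hpos)
  rcases le_or_gt 0 (latPoint M w 0) with h | h
  · exact ⟨w, hv, hr.symm, h, by linarith [hu.2]⟩
  · refine ⟨-w, by simpa using hv, by simpa using hr.symm, ?_⟩
    simp only [latPoint_neg, Pi.neg_apply, mem_Ico]
    constructor <;> linarith [hu.1]

lemma norm_vpart_eq_of_nonneg_iff (hs0 : 0 < s) (hs1 : s < 1) {w w' : Fin (d + 1) → ℤ}
    (hv : vpart (latPoint M w) ≠ 0) (hv' : vpart (latPoint M w') ≠ 0)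
    (hlt : ‖vpart (latPoint M w)‖ < Fval d M s) (hlt' : ‖vpart (latPoint M w')‖ < Fval d M s)
    (hu : latPoint M w 0 ∈ Ico 0 1) (hu' : latPoint M w' 0 ∈ Ico 0 1)
    (hsign : ∀ l, 0 ≤ vpart (latPoint M w) l ↔ 0 ≤ vpart (latPoint M w') l) :
    ‖vpart (latPoint M w)‖ = ‖vpart (latPoint M w')‖ := by
  by_contra hne
  have hvd : vpart (latPoint M (w - w')) ≠ 0 := by
    rw [latPoint_sub, vpart_sub, sub_ne_zero]
    exact fun h => hne (congrArg norm h)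
  have hltd : ‖vpart (latPoint M (w - w'))‖ < Fval d M s := by
    rw [latPoint_sub, vpart_sub]
    exact (norm_sub_le_max_of_nonneg_iff hsign).trans_lt (max_lt hlt hlt')
  have h := half_le_abs_of_norm_vpart_lt_Fval hs0 hs1 hv hlt
  have h' := half_le_abs_of_norm_vpart_lt_Fval hs0 hs1 hv' hlt'
  have hdiff := half_le_abs_of_norm_vpart_lt_Fval hs0 hs1 hvd hltd
  rw [abs_of_nonneg hu.1] at h
  rw [abs_of_nonneg hu'.1] at h'
  rw [latPoint_sub, Pi.sub_apply, abs_sub_comm] at hdiff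
  exact hdiff.not_gt (abs_sub_lt_iff.2 ⟨by linarith [hu'.2], by linarith [hu.2]⟩)

end Window

lemma Set.finite_and_ncard_le_add_one_of_injOn_nonmax {α β : Type*} [LinearOrder α] [Finite β]
    {S : Set α} (f : α → β) (hf : InjOn f {r ∈ S | ∃ c ∈ S, r < c}) :
    S.Finite ∧ S.ncard ≤ Nat.card β + 1 := by
  set T := {r ∈ S | ∃ c ∈ S, r < c}
  have hT : T.Finite := Finite.of_finite_image (toFinite _) hf
  have hrest : (S \ T).Subsingleton := by
    intro a ha b hb
    by_contra hab
    rcases lt_or_gt_of_ne hab with h | h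
    · exact ha.2 ⟨ha.1, b, hb.1, h⟩
    · exact hb.2 ⟨hb.1, a, ha.1, h⟩
  have hS : T ∪ S \ T = S := union_sdiff_cancel (sep_subset _ _)
  refine ⟨hS ▸ hT.union hrest.finite, ?_⟩
  calc S.ncard = (T ∪ S \ T).ncard := by rw [hS]
    _ ≤ T.ncard + (S \ T).ncard := ncard_union_le T (S \ T)
    _ ≤ Nat.card β + 1 := by
      gcongr
      · exact hf.ncard_image.symm.trans_le (ncard_le_card _)
      · exact ncard_le_one hrest.finite |>.2 hrest

/-- For every `d ≥ 1` and every `M ∈ SL(d+1, ℝ)`, the number of distinct values taken by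
`F(M, t)` as `t` ranges over `(0, 1)` is at most `2^d + 1`. -/
theorem Fval_card_range_le (d : ℕ) (hd : 1 ≤ d)
    (M : Matrix (Fin (d + 1)) (Fin (d + 1)) ℝ) (hM : M.det = 1) :
    { r : ℝ | ∃ t : ℝ, 0 < t ∧ t < 1 ∧ r = Fval d M t }.Finite ∧
    { r : ℝ | ∃ t : ℝ, 0 < t ∧ t < 1 ∧ r = Fval d M t }.ncard ≤ 2 ^ d + 1 := by
  set S := { r : ℝ | ∃ t : ℝ, 0 < t ∧ t < 1 ∧ r = Fval d M t }
  have hM' : IsUnit M.det := hM ▸ isUnit_one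
  have hwit : ∀ r ∈ S, ∃ w, vpart (latPoint M w) ≠ 0 ∧ ‖vpart (latPoint M w)‖ = r ∧
      latPoint M w 0 ∈ Ico 0 1 := by
    rintro _ ⟨t, ht0, ht1, rfl⟩
    exact exists_norm_vpart_eq_Fval hM' hd ht0 ht1
  choose! w hv hnorm hu using hwit
  have key := Set.finite_and_ncard_le_add_one_of_injOn_nonmax (S := S)
    (fun r => {l : Fin d | 0 ≤ vpart (latPoint M (w r)) l}) ?_
  · simpa [Nat.card_eq_fintype_card, Fintype.card_set] using key
  rintro a ⟨ha, c, hc, hac⟩ b ⟨hb, c', hc', hbc'⟩ hab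
  obtain ⟨s, hs0, hs1, hs⟩ : max c c' ∈ S := by
    rcases max_choice c c' with h | h <;> rw [h] <;> assumption
  rw [← hnorm a ha, ← hnorm b hb]
  refine norm_vpart_eq_of_nonneg_iff hs0 hs1 (hv a ha) (hv b hb) ?_ ?_ (hu a ha) (hu b hb)
    fun l => Set.ext_iff.1 hab l
  · rw [hnorm a ha, ← hs]; exact hac.trans_le (le_max_left c c')
  · rw [hnorm b hb, ← hs]; exact hbc'.trans_le (le_max_right c c')
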